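/- Let w and w' be admissible multidegrees on (Γ, 𝐧) such that w' is obtained from w by a finite sequence of twists at vertices all different from a fixed vertex v ∈ V(Γ). Then w'_Γ(v) ≥ w_Γ(v). Consequently, if w₀ is an admissible multidegree, w_v ∈ V(G(w₀)) is concentrated at v for each v ∈ V(Γ), and w ∈ V(Ḡ(w₀)), then w_Γ(v) ≤ (w_v)_Γ(v) for every v ∈ V(Γ). -/

import Mathlib

open scoped Classical

namespace LLS

variable {V E : Type*}

/-- `σ(e,v)`: `1` if `v` is the tail of `e`, `-1` if `v` is the head of `e`, `0` otherwise. -/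
noncomputable def sigma (tail head : E → V) (e : E) (v : V) : ℤ :=
  if tail e = v then 1 else if head e = v then -1 else 0

/-- The endpoint of `e` other than `v` (for `e` adjacent to `v`). -/
noncomputable def otherEnd (tail head : E → V) (e : E) (v : V) : V :=
  if tail e = v then head e else tail e

/-- The multigraph is loopless. -/
def Loopless (tail head : E → V) : Prop := ∀ e, tail e ≠ head e

/-- The multigraph is connected. -/
def MGConnected (tail head : E → V) : Prop :=
  ∀ u v : V, Relation.ReflTransGen
    (fun a b => ∃ e, (tail e = a ∧ head e = b) ∨ (tail e = b ∧ head e = a)) u v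

/-- An admissible multidegree on `(Γ, 𝐧)`: a function `V(Γ) → ℤ` together with an
element `μ(e) ∈ ℤ/𝐧(e)ℤ` for each edge `e`. -/
structure AdmMD (V E : Type*) (n : E → ℕ) where
  wV : V → ℤ
  mu : ∀ e : E, ZMod (n e)

section FinGraph

variable [Fintype V] [Fintype E] [DecidableEq V] [DecidableEq E]

/-- The twist of an admissible multidegree at a vertex `v`. -/
noncomputable def twist (tail head : E → V) (n : E → ℕ) (w : AdmMD V E n) (v : V) :
    AdmMD V E n where
  wV u := w.wV u
    - (if u = v then ((Finset.univ.filter fun e : E =>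
        sigma tail head e v ≠ 0 ∧ w.mu e = 0).card : ℤ) else 0)
    + ((Finset.univ.filter fun e : E => sigma tail head e v ≠ 0 ∧
        w.mu e + (sigma tail head e v : ZMod (n e)) = 0 ∧
        otherEnd tail head e v = u).card : ℤ)
  mu e := w.mu e + (sigma tail head e v : ZMod (n e))

/-- The negative twist of an admissible multidegree at a vertex `v`
(the inverse of `twist`). -/
noncomputable def negTwist (tail head : E → V) (n : E → ℕ) (w : AdmMD V E n) (v : V) :
    AdmMD V E n where
  wV u := w.wV u
    + (if u = v then ((Finset.univ.filter fun e : E => sigma tail head e v ≠ 0 ∧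
        w.mu e - (sigma tail head e v : ZMod (n e)) = 0).card : ℤ) else 0)
    - ((Finset.univ.filter fun e : E => sigma tail head e v ≠ 0 ∧
        w.mu e = 0 ∧ otherEnd tail head e v = u).card : ℤ)
  mu e := w.mu e - (sigma tail head e v : ZMod (n e))

/-- An admissible multidegree is concentrated at `v` if there is an ordering of all
vertices starting with `v` such that composing the negative twists at all previous
vertices makes the multidegree negative at each subsequent vertex. -/
def Concentrated (tail head : E → V) (n : E → ℕ) (w : AdmMD V E n) (v : V) : Prop :=
  ∃ l : List V, l.Nodup ∧ (∀ x : V, x ∈ l) ∧ l.head? = some v ∧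
    ∀ (i : ℕ) (h : i < l.length), 0 < i →
      (((l.take i).foldl (negTwist tail head n) w).wV (l.get ⟨i, h⟩)) < 0

/-- `w` is obtained from `w₀` by a finite sequence of twists, i.e. `w ∈ V(G(w₀))`. -/
def TwistSeq (tail head : E → V) (n : E → ℕ) (w₀ w : AdmMD V E n) : Prop :=
  ∃ l : List V, l.foldl (twist tail head n) w₀ = w

/-- `l` records the successive twist vertices of a minimal path from `w` to `w'`
in `G(w₀)`. -/
def IsMinPath (tail head : E → V) (n : E → ℕ) (w w' : AdmMD V E n) (l : List V) : Prop :=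
  l.foldl (twist tail head n) w = w' ∧
    ∀ l' : List V, l'.foldl (twist tail head n) w = w' → l.length ≤ l'.length

/-- The membership condition describing the subgraph `Ḡ(w₀)` of `G(w₀)`:
no minimal path from `w` to `w_v` involves twisting at `v`. -/
def InBarG (tail head : E → V) (n : E → ℕ) (w₀ : AdmMD V E n) (wv : V → AdmMD V E n)
    (w : AdmMD V E n) : Prop :=
  TwistSeq tail head n w₀ w ∧
    ∀ (v : V) (l : List V), IsMinPath tail head n w (wv v) l → v ∉ l

/-- Edges joining `v` and `u`. -/
noncomputable def edgesBetween (tail head : E → V) (v u : V) : Finset E :=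
  Finset.univ.filter fun e => (tail e = v ∧ head e = u) ∨ (head e = v ∧ tail e = u)

/-- Edges adjacent to `v`. -/
noncomputable def edgesAdj (tail head : E → V) (v : V) : Finset E :=
  Finset.univ.filter fun e => tail e = v ∨ head e = v

/-- The change of a divisor effected by a single chip-firing move at `v`. -/
noncomputable def fireDelta (tail head : E → V) (v : V) : V → ℤ := fun u =>
  ((edgesBetween tail head v u).card : ℤ)
    - (if u = v then ((edgesAdj tail head v).card : ℤ) else 0)

/-- A chip-firing move (twist) at `v`. -/
noncomputable def chipFire (tail head : E → V) (D : V → ℤ) (v : V) : V → ℤ :=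
  fun u => D u + fireDelta tail head v u

/-- The inverse of a chip-firing move at `v`. -/
noncomputable def negChipFire (tail head : E → V) (D : V → ℤ) (v : V) : V → ℤ :=
  fun u => D u - fireDelta tail head v u

/-- A divisor (multidegree) on a graph is concentrated at `v`. -/
def ConcentratedDiv (tail head : E → V) (D : V → ℤ) (v : V) : Prop :=
  ∃ l : List V, l.Nodup ∧ (∀ x : V, x ∈ l) ∧ l.head? = some v ∧
    ∀ (i : ℕ) (h : i < l.length), 0 < i →
      (((l.take i).foldl (negChipFire tail head) D) (l.get ⟨i, h⟩)) < 0

/-- A divisor on a graph is `v₀`-reduced. -/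
def VReduced (tail head : E → V) (D : V → ℤ) (v₀ : V) : Prop :=
  (∀ u, u ≠ v₀ → 0 ≤ D u) ∧
    ∀ S : Finset V, S.Nonempty → v₀ ∉ S →
      ∃ v ∈ S, D v < ((Finset.univ.filter fun e : E =>
        (tail e = v ∧ head e ∉ S) ∨ (head e = v ∧ tail e ∉ S)).card : ℤ)

/-- The function `D_{w,v}` on edges of `Γ` determined by a path `l` from `w` to `w_v`. -/
noncomputable def DFun (tail head : E → V) (n : E → ℕ) (w : AdmMD V E n) (l : List V)
    (v : V) (et : E) : ℤ :=
  (((Finset.univ : Finset (Fin l.length)).filter fun j =>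
      l.get j = otherEnd tail head et v ∧
        ((l.take (j.val + 1)).foldl (twist tail head n) w).mu et = 0).card : ℤ)
  - (((Finset.univ : Finset (Fin l.length)).filter fun j =>
      l.get j = v ∧ ((l.take j.val).foldl (twist tail head n) w).mu et = 0).card : ℤ)

end FinGraph

/-- The tail map of the subdivided graph `Γ̃`: the edge `e` of `Γ` is subdivided into
`𝐧(e)` edges `(e, j)`, `j = 0, …, 𝐧(e) - 1`, numbered from the tail of `e`; the new
vertices over `e` are `(e, i)`, `i = 0, …, 𝐧(e) - 2`, with `(e, i)` being the
`(i+1)`-st new vertex from the tail of `e`. -/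
def tailT (tail head : E → V) (n : E → ℕ) :
    (Σ e : E, Fin (n e)) → V ⊕ Σ e : E, Fin (n e - 1) := fun p =>
  if h : p.2.val = 0 then Sum.inl (tail p.1)
  else Sum.inr ⟨p.1, ⟨p.2.val - 1, by have := p.2.isLt; omega⟩⟩

/-- The head map of the subdivided graph `Γ̃`. -/
def headT (tail head : E → V) (n : E → ℕ) :
    (Σ e : E, Fin (n e)) → V ⊕ Σ e : E, Fin (n e - 1) := fun p =>
  if h : p.2.val = n p.1 - 1 then Sum.inl (head p.1)
  else Sum.inr ⟨p.1, ⟨p.2.val, by have := p.2.isLt; omega⟩⟩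

/-- The multidegree on the subdivided graph `Γ̃` induced by an admissible multidegree:
it agrees with `w` on old vertices, is `1` on the `μ(e)`-th new vertex over `e`
when `μ(e) ≠ 0`, and is `0` on all other new vertices. -/
noncomputable def inducedMD (n : E → ℕ) (w : AdmMD V E n) :
    (V ⊕ Σ e : E, Fin (n e - 1)) → ℤ
  | Sum.inl v => w.wV v
  | Sum.inr ⟨e, i⟩ => if (w.mu e).val = i.val + 1 then 1 else 0

/-- The simple graph `Γ̄` associated to the multigraph `Γ`: same vertices, one edge
between each pair of adjacent vertices. -/
def barGraph (tail head : E → V) : SimpleGraph V where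
  Adj u v := u ≠ v ∧ ∃ e, (tail e = u ∧ head e = v) ∨ (tail e = v ∧ head e = u)
  symm := by
    constructor
    intro u v h
    exact ⟨h.1.symm, h.2.imp fun e he => he.symm⟩
  loopless := ⟨fun u h => h.1 rfl⟩


/-! Twisting at `x ≠ v` can only add to the degree at `v`, which is the first claim.
For the second, note that twisting once at every vertex is the identity: an edge is acted
on only by the twists at its tail and at its head, and these two cancel. Hence every twist
can be undone by twists, so `w ∈ V(G(w₀))` reaches `w_v` through `w₀`, a minimal path from
`w` to `w_v` exists, and by the definition of `Ḡ(w₀)` it never twists at `v`. -/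

lemma AdmMD.ext {n : E → ℕ} {a b : AdmMD V E n} (hwV : a.wV = b.wV) (hmu : a.mu = b.mu) :
    a = b := by
  cases a; cases b; congr

section Sigma

variable {tail head : E → V}

lemma sigma_tail (e : E) : sigma tail head e (tail e) = 1 := by
  simp [sigma]

lemma sigma_head (hloop : Loopless tail head) (e : E) : sigma tail head e (head e) = -1 := by
  simp [sigma, hloop e]

lemma sigma_ne_zero_iff {e : E} {x : V} :
    sigma tail head e x ≠ 0 ↔ x = tail e ∨ x = head e := by
  unfold sigma
  split_ifs <;> simp_all [eq_comm]

lemma otherEnd_tail (e : E) : otherEnd tail head e (tail e) = head e := by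
  simp [otherEnd]

lemma otherEnd_head (hloop : Loopless tail head) (e : E) :
    otherEnd tail head e (head e) = tail e := by
  simp [otherEnd, hloop e]

end Sigma

section EdgeTwist

variable [DecidableEq V] (tail head : E → V) (n : E → ℕ)

/-- The change of the degree at `u` caused by the edge `e`, carrying `μ(e) = m`,
when twisting at `x`. -/
noncomputable def edgeDelta (e : E) (m : ZMod (n e)) (x u : V) : ℤ :=
  (if sigma tail head e x ≠ 0 ∧ m + (sigma tail head e x : ZMod (n e)) = 0 ∧
      otherEnd tail head e x = u then 1 else 0)
    - (if u = x ∧ sigma tail head e x ≠ 0 ∧ m = 0 then 1 else 0)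

/-- The twist as seen by a single edge `e`: the value `μ(e)` together with the accumulated
change of degrees due to `e`. -/
noncomputable def edgeTwist (e : E) (p : ZMod (n e) × (V → ℤ)) (x : V) :
    ZMod (n e) × (V → ℤ) :=
  (p.1 + (sigma tail head e x : ZMod (n e)), p.2 + edgeDelta tail head n e p.1 x)

lemma edgeTwist_of_sigma_eq_zero (e : E) (p : ZMod (n e) × (V → ℤ)) {x : V}
    (hx : sigma tail head e x = 0) : edgeTwist tail head n e p x = p := by
  ext u <;> simp [edgeTwist, edgeDelta, hx]

variable {tail head}

lemma edgeTwist_tail_head (hloop : Loopless tail head) (e : E) (p : ZMod (n e) × (V → ℤ)) :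
    edgeTwist tail head n e (edgeTwist tail head n e p (tail e)) (head e) = p := by
  ext u
  · simp [edgeTwist, sigma_tail, sigma_head hloop]
  · simp only [edgeTwist, sigma_tail, Int.cast_one, sigma_head hloop, Int.reduceNeg, Int.cast_neg,
      add_neg_cancel_right, Pi.add_apply, edgeDelta, ne_eq, one_ne_zero, not_false_eq_true,
      otherEnd_tail, true_and, neg_eq_zero, otherEnd_head hloop]
    simp only [eq_comm (a := u), and_comm]
    ring

lemma edgeTwist_head_tail (hloop : Loopless tail head) (e : E) (p : ZMod (n e) × (V → ℤ)) :
    edgeTwist tail head n e (edgeTwist tail head n e p (head e)) (tail e) = p := by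
  ext u
  · simp [edgeTwist, sigma_tail, sigma_head hloop]
  · simp only [edgeTwist, sigma_head hloop, Int.reduceNeg, Int.cast_neg, Int.cast_one, sigma_tail,
      neg_add_cancel_right, Pi.add_apply, edgeDelta, ne_eq, neg_eq_zero, one_ne_zero,
      not_false_eq_true, otherEnd_head hloop, true_and, otherEnd_tail]
    simp only [eq_comm (a := u), and_comm]
    ring

lemma edgeTwist_right_comm (hloop : Loopless tail head) (e : E) (p : ZMod (n e) × (V → ℤ))
    (x y : V) :
    edgeTwist tail head n e (edgeTwist tail head n e p x) y
      = edgeTwist tail head n e (edgeTwist tail head n e p y) x := by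
  by_cases hx : sigma tail head e x = 0
  · simp only [edgeTwist_of_sigma_eq_zero tail head n e _ hx]
  by_cases hy : sigma tail head e y = 0
  · simp only [edgeTwist_of_sigma_eq_zero tail head n e _ hy]
  rcases sigma_ne_zero_iff.mp hx with rfl | rfl <;> rcases sigma_ne_zero_iff.mp hy with rfl | rfl
  all_goals simp only [edgeTwist_tail_head n hloop, edgeTwist_head_tail n hloop]

lemma foldl_edgeTwist_of_nodup (hloop : Loopless tail head) (e : E)
    (p : ZMod (n e) × (V → ℤ)) {l : List V} (hl : l.Nodup) (ht : tail e ∈ l)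
    (hh : head e ∈ l) : l.foldl (edgeTwist tail head n e) p = p := by
  have hh' : head e ∈ l.erase (tail e) := (hl.mem_erase_iff).mpr ⟨(hloop e).symm, hh⟩
  have hperm : l.Perm (tail e :: head e :: (l.erase (tail e)).erase (head e)) :=
    (List.perm_cons_erase ht).trans ((List.perm_cons_erase hh').cons _)
  have hrest : ∀ q, ∀ x ∈ (l.erase (tail e)).erase (head e),
      edgeTwist tail head n e q x = q := by
    intro q x hx
    rw [(hl.erase _).mem_erase_iff, hl.mem_erase_iff] at hx
    refine edgeTwist_of_sigma_eq_zero tail head n e q (not_not.mp fun hσ => ?_)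
    rcases sigma_ne_zero_iff.mp hσ with rfl | rfl
    exacts [hx.2.1 rfl, hx.1 rfl]
  rw [hperm.foldl_eq' (fun x _ y _ q => edgeTwist_right_comm n hloop e q x y),
    List.foldl_cons, List.foldl_cons, edgeTwist_tail_head n hloop,
    List.foldl_ext _ (fun q _ => q) p hrest, List.foldl_fixed]

end EdgeTwist

section Twist

variable [Fintype E] [DecidableEq V] (tail head : E → V) (n : E → ℕ)

lemma wV_le_twist (w : AdmMD V E n) {v x : V} (hx : x ≠ v) :
    w.wV v ≤ (twist tail head n w x).wV v := by
  simp only [twist, if_neg hx.symm, sub_zero, le_add_iff_nonneg_right]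
  positivity

lemma wV_le_foldl_twist (w : AdmMD V E n) {v : V} {l : List V} (hv : v ∉ l) :
    w.wV v ≤ (l.foldl (twist tail head n) w).wV v := by
  induction l generalizing w with
  | nil => exact le_rfl
  | cons x l ih =>
    rw [List.mem_cons, not_or] at hv
    exact (wV_le_twist tail head n w (Ne.symm hv.1)).trans (ih _ hv.2)

lemma twist_wV_eq_add_sum_edgeDelta (w : AdmMD V E n) (x u : V) :
    (twist tail head n w x).wV u = w.wV u + ∑ e, edgeDelta tail head n e (w.mu e) x u := by
  simp only [twist, edgeDelta, Finset.sum_sub_distrib, Finset.card_filter, Nat.cast_sum,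
    Nat.cast_ite, Nat.cast_one, Nat.cast_zero]
  by_cases hux : u = x
  · subst hux
    simp only [↓reduceIte, ne_eq, Finset.sum_boole, true_and]
    ring
  · simp [hux]

lemma foldl_twist_eq_foldl_edgeTwist (w : AdmMD V E n) (l : List V) :
    (∀ e, (l.foldl (twist tail head n) w).mu e
      = (l.foldl (edgeTwist tail head n e) (w.mu e, 0)).1) ∧
    ∀ u, (l.foldl (twist tail head n) w).wV u
      = w.wV u + ∑ e, (l.foldl (edgeTwist tail head n e) (w.mu e, 0)).2 u := by
  induction l using List.reverseRecOn with
  | nil => simp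
  | append_singleton l x ih =>
    simp only [List.foldl_append, List.foldl_cons, List.foldl_nil]
    refine ⟨fun e => by simp [twist, edgeTwist, ih.1 e], fun u => ?_⟩
    simp only [twist_wV_eq_add_sum_edgeDelta, ih.1, ih.2, edgeTwist, Pi.add_apply,
      Finset.sum_add_distrib, add_assoc]

variable {tail head}

lemma foldl_twist_of_nodup (hloop : Loopless tail head) (w : AdmMD V E n) {l : List V}
    (hl : l.Nodup) (hmem : ∀ x, x ∈ l) : l.foldl (twist tail head n) w = w := by
  obtain ⟨hmu, hwV⟩ := foldl_twist_eq_foldl_edgeTwist tail head n w l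
  simp only [foldl_edgeTwist_of_nodup n hloop _ _ hl (hmem _) (hmem _), Pi.zero_apply,
    Finset.sum_const_zero, add_zero] at hmu hwV
  exact AdmMD.ext (funext hwV) (funext hmu)

lemma exists_foldl_twist_twist_eq [Fintype V] (hloop : Loopless tail head)
    (w : AdmMD V E n) (x : V) :
    ∃ m : List V, m.foldl (twist tail head n) (twist tail head n w x) = w := by
  refine ⟨Finset.univ.toList.erase x, foldl_twist_of_nodup n hloop w (l := x :: _) ?_ ?_⟩
  · exact ((Finset.nodup_toList _).erase x).cons (Finset.nodup_toList _).not_mem_erase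
  · intro y
    by_cases hy : y = x
    · simp [hy]
    · simp [List.mem_erase_of_ne hy]

lemma exists_foldl_twist_foldl_twist_eq [Fintype V] (hloop : Loopless tail head)
    (w : AdmMD V E n) (l : List V) :
    ∃ m : List V, m.foldl (twist tail head n) (l.foldl (twist tail head n) w) = w := by
  induction l generalizing w with
  | nil => exact ⟨[], rfl⟩
  | cons x l ih =>
    obtain ⟨m₁, hm₁⟩ := ih (twist tail head n w x)
    obtain ⟨m₂, hm₂⟩ := exists_foldl_twist_twist_eq n hloop w x
    exact ⟨m₁ ++ m₂, by rw [List.foldl_append, List.foldl_cons, hm₁, hm₂]⟩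

variable (tail head)

lemma exists_isMinPath {w w' : AdmMD V E n}
    (h : ∃ l : List V, l.foldl (twist tail head n) w = w') :
    ∃ l, IsMinPath tail head n w w' l := by
  have hlen : ∃ k, ∃ l : List V, l.length = k ∧ l.foldl (twist tail head n) w = w' :=
    let ⟨l, hl⟩ := h; ⟨_, l, rfl, hl⟩
  obtain ⟨l, hl, hfold⟩ := Nat.find_spec hlen
  exact ⟨l, hfold, fun l' hl' => hl ▸ Nat.find_min' hlen ⟨l', rfl, hl'⟩⟩

end Twist

theorem statement_10_general {V E : Type*} [Fintype V] [Fintype E] [DecidableEq V]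
    (tail head : E → V) (n : E → ℕ)
    (hloop : Loopless tail head)
    (w₀ : AdmMD V E n) (wv : V → AdmMD V E n)
    (hwv : ∀ v : V, TwistSeq tail head n w₀ (wv v) ∧ Concentrated tail head n (wv v) v) :
    (∀ (w w' : AdmMD V E n) (v : V) (l : List V), v ∉ l →
        l.foldl (twist tail head n) w = w' → w.wV v ≤ w'.wV v) ∧
    (∀ w : AdmMD V E n, InBarG tail head n w₀ wv w →
        ∀ v : V, w.wV v ≤ (wv v).wV v) := by
  refine ⟨fun w _ v l hv hw' => hw' ▸ wV_le_foldl_twist tail head n w hv, ?_⟩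
  rintro _ ⟨⟨l, rfl⟩, hmin⟩ v
  obtain ⟨m, hm⟩ := exists_foldl_twist_foldl_twist_eq n hloop w₀ l
  obtain ⟨l₀, hl₀⟩ := (hwv v).1
  obtain ⟨p, hp⟩ := exists_isMinPath tail head n ⟨m ++ l₀, by rw [List.foldl_append, hm, hl₀]⟩
  exact hp.1 ▸ wV_le_foldl_twist tail head n _ (hmin v p hp)

/-- twisting at vertices other than `v` does not decrease the degree at
`v`; consequently, for `w ∈ V(Ḡ(w₀))` the degree of `w` at each `v` is at most that of
`w_v` at `v`. -/
theorem statement_10 {V E : Type*} [Fintype V] [Fintype E] [DecidableEq V] [DecidableEq E]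
    (tail head : E → V) (n : E → ℕ)
    (hloop : Loopless tail head) (hconn : MGConnected tail head)
    (hn : ∀ e, 0 < n e)
    (w₀ : AdmMD V E n) (wv : V → AdmMD V E n)
    (hwv : ∀ v : V, TwistSeq tail head n w₀ (wv v) ∧ Concentrated tail head n (wv v) v) :
    (∀ (w w' : AdmMD V E n) (v : V) (l : List V), v ∉ l →
        l.foldl (twist tail head n) w = w' → w.wV v ≤ w'.wV v) ∧
    (∀ w : AdmMD V E n, InBarG tail head n w₀ wv w →
        ∀ v : V, w.wV v ≤ (wv v).wV v) :=
  statement_10_general tail head n hloop w₀ wv hwv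

end LLS
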